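/- Let $M, d$ be positive integers, $w \in \mathbb{R}^d$, and $o, q \in \{0,1,\dots,M\}^d$. Define $P(o) \in \mathbb{R}^{2Md}$ as the concatenation over coordinates $i$ and positions $j \in \{1,\dots,M\}$ of the values $\cos(\frac{\pi}{2} u(o_i)_j)$, followed by the values $\sin(\frac{\pi}{2} u(o_i)_j)$, where $u(x)_j = 1$ if $j \le x$ and $0$ otherwise. Define $Q_w(q) \in \mathbb{R}^{2Md}$ analogously with entries $w_i \cos(\frac{\pi}{2} u(q_i)_j)$ and $w_i \sin(\frac{\pi}{2} u(q_i)_j)$. Then $\sum_{i=1}^d w_i |o_i - q_i| = M \sum_{i=1}^d w_i - \langle P(o), Q_w(q) \rangle$. -/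

import Mathlib

open Real

/-- The unary encoding bit: `u x j = 1` if the (1-based) position `j+1 ≤ x`, else `0`. -/
noncomputable def unaryBit (M : ℕ) (x : ℕ) (j : Fin M) : ℝ :=
  if (j : ℕ) < x then 1 else 0

/-!
The unary code `u` turns the weighted `l₁` distance into a weighted Hamming distance:
for `a, b ≤ M` the codes `u a` and `u b` differ in exactly `|a - b|` positions. The map
`t ↦ (cos (π t / 2), sin (π t / 2))` sends the bits `0, 1` to orthonormal vectors, so the
inner product of the embedded bits `s, t` is `cos (π (s - t) / 2) = 1 - |s - t|`.
Summing over positions and coordinates gives the identity.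
-/

theorem unaryBit_eq_zero_or_eq_one (M x : ℕ) (j : Fin M) :
    unaryBit M x j = 0 ∨ unaryBit M x j = 1 := by
  unfold unaryBit
  split_ifs <;> simp

theorem unaryBit_mono (M : ℕ) {a b : ℕ} (hab : a ≤ b) (j : Fin M) :
    unaryBit M a j ≤ unaryBit M b j := by
  unfold unaryBit
  split_ifs <;> first | omega | norm_num

theorem sum_unaryBit {M a : ℕ} (ha : a ≤ M) : ∑ j : Fin M, unaryBit M a j = a := by
  simp only [unaryBit, Finset.sum_boole, Fin.card_filter_val_lt, min_eq_right ha]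

theorem sum_abs_sub_unaryBit {M a b : ℕ} (ha : a ≤ M) (hb : b ≤ M) :
    ∑ j : Fin M, |unaryBit M a j - unaryBit M b j| = |(a : ℝ) - b| := by
  wlog hab : a ≤ b generalizing a b
  · simp_rw [abs_sub_comm (unaryBit M a _), abs_sub_comm (a : ℝ)]
    exact this hb ha (le_of_not_ge hab)
  have hab' : (a : ℝ) ≤ b := by exact_mod_cast hab
  have term (j : Fin M) : |unaryBit M a j - unaryBit M b j| = unaryBit M b j - unaryBit M a j := by
    rw [abs_sub_comm, abs_of_nonneg (sub_nonneg.mpr (unaryBit_mono M hab j))]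
  rw [Finset.sum_congr rfl fun j _ => term j, Finset.sum_sub_distrib, sum_unaryBit ha,
    sum_unaryBit hb, abs_sub_comm, abs_of_nonneg (sub_nonneg.mpr hab')]

theorem cos_mul_cos_add_sin_mul_sin_of_bits {s t : ℝ} (hs : s = 0 ∨ s = 1) (ht : t = 0 ∨ t = 1) :
    cos (π / 2 * s) * cos (π / 2 * t) + sin (π / 2 * s) * sin (π / 2 * t) = 1 - |s - t| := by
  rw [← cos_sub, ← mul_sub]
  rcases hs with rfl | rfl <;> rcases ht with rfl | rfl <;> norm_num

theorem sum_unaryBit_embedding_inner {M a b : ℕ} (ha : a ≤ M) (hb : b ≤ M) :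
    ∑ j : Fin M, (cos (π / 2 * unaryBit M a j) * cos (π / 2 * unaryBit M b j) +
      sin (π / 2 * unaryBit M a j) * sin (π / 2 * unaryBit M b j)) = M - |(a : ℝ) - b| := by
  simp_rw [cos_mul_cos_add_sin_mul_sin_of_bits (unaryBit_eq_zero_or_eq_one M a _)
    (unaryBit_eq_zero_or_eq_one M b _)]
  rw [Finset.sum_sub_distrib, sum_abs_sub_unaryBit ha hb]
  simp

theorem stmt_3_general (M d : ℕ) (w : Fin d → ℝ) (o q : Fin d → ℕ)
    (ho : ∀ i, o i ≤ M) (hq : ∀ i, q i ≤ M) :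
    ∑ i, w i * |(o i : ℝ) - (q i : ℝ)| =
      (M : ℝ) * ∑ i, w i -
        ((∑ i : Fin d, ∑ j : Fin M,
            Real.cos (π / 2 * unaryBit M (o i) j) * (w i * Real.cos (π / 2 * unaryBit M (q i) j))) +
          ∑ i : Fin d, ∑ j : Fin M,
            Real.sin (π / 2 * unaryBit M (o i) j) * (w i * Real.sin (π / 2 * unaryBit M (q i) j))) := by
  have coordinate (i : Fin d) :
      (∑ j : Fin M, cos (π / 2 * unaryBit M (o i) j) * (w i * cos (π / 2 * unaryBit M (q i) j))) +
        ∑ j : Fin M, sin (π / 2 * unaryBit M (o i) j) * (w i * sin (π / 2 * unaryBit M (q i) j)) =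
      w i * (M - |(o i : ℝ) - q i|) := by
    rw [← sum_unaryBit_embedding_inner (ho i) (hq i), Finset.mul_sum, ← Finset.sum_add_distrib]
    exact Finset.sum_congr rfl fun j _ => by ring
  rw [← Finset.sum_add_distrib, Finset.sum_congr rfl fun i _ => coordinate i, Finset.mul_sum,
    ← Finset.sum_sub_distrib]
  exact Finset.sum_congr rfl fun i _ => by ring

theorem stmt_3 (M d : ℕ) (hM : 0 < M) (hd : 0 < d) (w : Fin d → ℝ) (o q : Fin d → ℕ)
    (ho : ∀ i, o i ≤ M) (hq : ∀ i, q i ≤ M) :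
    ∑ i, w i * |(o i : ℝ) - (q i : ℝ)| =
      (M : ℝ) * ∑ i, w i -
        ((∑ i : Fin d, ∑ j : Fin M,
            Real.cos (π / 2 * unaryBit M (o i) j) * (w i * Real.cos (π / 2 * unaryBit M (q i) j))) +
          ∑ i : Fin d, ∑ j : Fin M,
            Real.sin (π / 2 * unaryBit M (o i) j) * (w i * Real.sin (π / 2 * unaryBit M (q i) j))) :=
  stmt_3_general M d w o q ho hq
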